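/- arXiv:2501.15822 — 3 statements merged into one kernel-verified Lean document; each statement's English description precedes it below -/
import Mathlib

section
/- Let X be a convex cone in ℝ^n, η a point in the relative interior of X, and γ a point of the relative boundary ∂X = cl(X) \ X°. Then for every t > 0, the open segment (tγ − η, γ) is disjoint from the closure of X. -/
/-! If `z ∈ cl X` lay on the segment, say `z = a (tγ - η) + b γ` with `a, b > 0`, then
`(a t + b) γ = a η + z`. The relative interior of a convex cone is stable under positive
scaling and under adding points of the closure, so `a η + z`, hence `γ`, would lie in `X°`. -/

open Set

variable {n : ℕ}

/-- A convex cone in `ℝ^n`: closed under nonnegative combinations. -/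
def IsConvexCone (X : Set (Fin n → ℝ)) : Prop :=
  ∀ ⦃x⦄, x ∈ X → ∀ ⦃y⦄, y ∈ X → ∀ ⦃u v : ℝ⦄, 0 ≤ u → 0 ≤ v → u • x + v • y ∈ X

/-- The relative interior of `X`: points of `X` admitting a neighborhood (inside the
linear span of `X`, with its subspace topology) contained in `X`. -/
def relInt (X : Set (Fin n → ℝ)) : Set (Fin n → ℝ) :=
  {x ∈ X | ∃ ε : ℝ, 0 < ε ∧ ∀ y ∈ Submodule.span ℝ X, dist y x < ε → y ∈ X}

namespace IsConvexCone

variable {X : Set (Fin n → ℝ)}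

lemma add_mem (hX : IsConvexCone X) {x y : Fin n → ℝ} (hx : x ∈ X) (hy : y ∈ X) :
    x + y ∈ X := by
  simpa using hX hx hy zero_le_one zero_le_one

lemma smul_mem (hX : IsConvexCone X) {c : ℝ} (hc : 0 ≤ c) {x : Fin n → ℝ} (hx : x ∈ X) :
    c • x ∈ X := by
  simpa using hX hx hx hc le_rfl

lemma smul_mem_relInt (hX : IsConvexCone X) {c : ℝ} (hc : 0 < c) {η : Fin n → ℝ}
    (hη : η ∈ relInt X) : c • η ∈ relInt X := by
  obtain ⟨hηX, ε, hε, hball⟩ := hη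
  refine ⟨hX.smul_mem hc.le hηX, c * ε, mul_pos hc hε, fun y hy hdist => ?_⟩
  have hdist' : dist (c⁻¹ • y) η < ε := by
    rw [← inv_smul_smul₀ hc.ne' η, dist_smul₀, Real.norm_of_nonneg (inv_nonneg.2 hc.le),
      inv_mul_lt_iff₀ hc]
    exact hdist
  simpa [smul_inv_smul₀ hc.ne'] using
    hX.smul_mem hc.le (hball _ (Submodule.smul_mem _ _ hy) hdist')

/-- The ball of radius `ε / 2` around `η + z` works: for `x ∈ X` within `ε / 2` of `z`,
each of its points `y` has `y - x` within `ε` of `η`, so `y = (y - x) + x ∈ X`. -/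
lemma add_mem_relInt (hX : IsConvexCone X) {η z : Fin n → ℝ} (hη : η ∈ relInt X)
    (hz : z ∈ closure X) : η + z ∈ relInt X := by
  obtain ⟨hηX, ε, hε, hball⟩ := hη
  have hε2 : 0 < ε / 2 := half_pos hε
  have hball' : ∀ y ∈ Submodule.span ℝ X, dist y (η + z) < ε / 2 → y ∈ X := by
    intro y hy hdist
    obtain ⟨x, hxX, hzx⟩ := Metric.mem_closure_iff.mp hz (ε / 2) hε2
    have hyx : dist (y - x) η < ε := by
      calc dist (y - x) η = ‖(y - (η + z)) + (z - x)‖ := by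
            rw [dist_eq_norm]; congr 1; abel
        _ ≤ dist y (η + z) + dist z x := by
            rw [dist_eq_norm, dist_eq_norm]; exact norm_add_le _ _
        _ < ε := by linarith
    simpa using hX.add_mem (hball _ (Submodule.sub_mem _ hy (Submodule.subset_span hxX)) hyx) hxX
  have hspan : η + z ∈ Submodule.span ℝ X :=
    Submodule.add_mem _ (Submodule.subset_span hηX)
      (closure_minimal Submodule.subset_span (Submodule.closed_of_finiteDimensional _) hz)
  exact ⟨hball' _ hspan (by simpa using hε2), ε / 2, hε2, hball'⟩

end IsConvexCone

theorem stmt_2 (X : Set (Fin n → ℝ)) (hX : IsConvexCone X)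
    (η γ : Fin n → ℝ) (hη : η ∈ relInt X) (hγ : γ ∈ closure X \ relInt X) :
    ∀ t : ℝ, 0 < t → openSegment ℝ (t • γ - η) γ ∩ closure X = ∅ := by
  intro t ht
  refine eq_empty_iff_forall_notMem.2 fun z ⟨⟨a, b, ha, hb, _, hz⟩, hzX⟩ => hγ.2 ?_
  have hc : 0 < a * t + b := by positivity
  have hγ_eq : γ = (a * t + b)⁻¹ • (a • η + z) := by
    rw [← hz, eq_inv_smul_iff₀ hc.ne']
    module
  rw [hγ_eq]
  exact hX.smul_mem_relInt (inv_pos.2 hc) (hX.add_mem_relInt (hX.smul_mem_relInt ha hη) hzX)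
end

section
/- Let Λ be a finite-dimensional algebra and θ ∈ K₀(proj Λ)_ℝ. The θ-semistable subcategory W_θ = T̄_θ ∩ F̄_θ, where T̄_θ = {M : ⟨θ,[M']⟩ ≥ 0 for all quotients M' of M} and F̄_θ = {M : ⟨θ,[M']⟩ ≤ 0 for all submodules M' of M}, is a wide subcategory of mod Λ: it is closed under kernels, cokernels, and extensions. -/
/-!
Since `Λ eᵢ` is projective, `M ↦ eᵢ M ≅ Hom(Λ eᵢ, M)` is exact, so `⟨θ, -⟩` is additive on
short exact sequences. A semistable module pairs to zero with `θ`, and a module pairing to zero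
lies in `W_θ` as soon as it lies in `F̄_θ`. For `f : M → N` with `M, N ∈ W_θ`,
`0 = ⟨θ, ker f⟩ + ⟨θ, im f⟩` with both terms `≤ 0`, so both vanish: `ker f` inherits `F̄_θ`
from `M`, and `coker f` from `N`, since a submodule `Q ≤ N / im f` pairs like its preimage in `N`.
For an extension `0 → A → B → C → 0`, a submodule `B' ≤ B` is an extension of
`g(B') ≤ C` by `B' ∩ A ≤ A`.
-/

open Module

variable (k Λ : Type) [Field k] [Ring Λ] [Algebra k Λ]

/-- Left multiplication by an algebra element, as a `k`-linear endomorphism of a module. -/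
noncomputable def mulMap (a : Λ) (M : Type) [AddCommGroup M] [Module k M] [Module Λ M]
    [IsScalarTower k Λ M] : M →ₗ[k] M where
  toFun m := a • m
  map_add' := smul_add a
  map_smul' c m := by
    simp only [RingHom.id_apply]
    rw [← algebraMap_smul Λ c m, smul_smul, ← Algebra.commutes, ← smul_smul,
      algebraMap_smul]

/-- The Euler pairing `⟨θ, [M]⟩` of `θ ∈ K₀(proj Λ)_ℝ` (written in the basis of the
indecomposable projectives `P_i = Λ e_i`) with a module `M`, using
`dim_k Hom(Λ e_i, M) = dim_k (e_i • M)`. -/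
noncomputable def euler {n : ℕ} (e : Fin n → Λ) (θ : Fin n → ℝ)
    (M : Type) [AddCommGroup M] [Module k M] [Module Λ M] [IsScalarTower k Λ M] : ℝ :=
  ∑ i, θ i * (Module.finrank k (LinearMap.range (mulMap k Λ (e i) M)) : ℝ)

/-- `M ∈ T̄_θ` : every quotient of `M` pairs nonnegatively with `θ`. -/
def TbarMem {n : ℕ} (e : Fin n → Λ) (θ : Fin n → ℝ) (M : Type) [AddCommGroup M]
    [Module k M] [Module Λ M] [IsScalarTower k Λ M] : Prop :=
  ∀ N : Submodule Λ M, 0 ≤ euler k Λ e θ (M ⧸ N)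

/-- `M ∈ F̄_θ` : every submodule of `M` pairs nonpositively with `θ`. -/
def FbarMem {n : ℕ} (e : Fin n → Λ) (θ : Fin n → ℝ) (M : Type) [AddCommGroup M]
    [Module k M] [Module Λ M] [IsScalarTower k Λ M] : Prop :=
  ∀ N : Submodule Λ M, euler k Λ e θ (↥N) ≤ 0

/-- `M ∈ F_θ` : every nonzero submodule of `M` pairs strictly negatively with `θ`. -/
def FMem {n : ℕ} (e : Fin n → Λ) (θ : Fin n → ℝ) (M : Type) [AddCommGroup M]
    [Module k M] [Module Λ M] [IsScalarTower k Λ M] : Prop :=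
  ∀ N : Submodule Λ M, N ≠ ⊥ → euler k Λ e θ (↥N) < 0

/-- `M ∈ W_θ = T̄_θ ∩ F̄_θ` : the `θ`-semistable modules. -/
def WMem {n : ℕ} (e : Fin n → Λ) (θ : Fin n → ℝ) (M : Type) [AddCommGroup M]
    [Module k M] [Module Λ M] [IsScalarTower k Λ M] : Prop :=
  TbarMem k Λ e θ M ∧ FbarMem k Λ e θ M

theorem Module.finrank_eq_add_of_range_eq_ker {K A B C : Type*} [DivisionRing K]
    [AddCommGroup A] [Module K A] [AddCommGroup B] [Module K B] [FiniteDimensional K B]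
    [AddCommGroup C] [Module K C] (f : A →ₗ[K] B) (g : B →ₗ[K] C)
    (hf : Function.Injective f) (hg : Function.Surjective g)
    (hfg : LinearMap.range f = LinearMap.ker g) :
    finrank K B = finrank K A + finrank K C := by
  rw [← g.finrank_range_add_finrank_ker, ← hfg, LinearMap.range_eq_top.2 hg, finrank_top,
    LinearMap.finrank_range_of_inj hf, add_comm]

section Modules

variable {k Λ} {M N : Type} [AddCommGroup M] [Module k M] [Module Λ M] [IsScalarTower k Λ M]
  [AddCommGroup N] [Module k N] [Module Λ N] [IsScalarTower k Λ N]
  {A B C : Type} [AddCommGroup A] [Module k A] [Module Λ A] [IsScalarTower k Λ A]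
  [AddCommGroup B] [Module k B] [Module Λ B] [IsScalarTower k Λ B]
  [AddCommGroup C] [Module k C] [Module Λ C] [IsScalarTower k Λ C]
  {f : A →ₗ[Λ] B} {g : B →ₗ[Λ] C}

instance Submodule.finite_of_finite (P : Submodule Λ M) [Module.Finite k M] :
    Module.Finite k P :=
  inferInstanceAs (Module.Finite k (P.restrictScalars k))

theorem smul_eq_self_of_mem_range_mulMap {a : Λ} (ha : IsIdempotentElem a) {x : M}
    (hx : x ∈ LinearMap.range (mulMap k Λ a M)) : a • x = x := by
  obtain ⟨m, rfl⟩ := hx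
  exact (smul_smul a a m).trans (congrArg (· • m) ha)

theorem map_mem_range_mulMap (a : Λ) (φ : M →ₗ[Λ] N) {x : M}
    (hx : x ∈ LinearMap.range (mulMap k Λ a M)) : φ x ∈ LinearMap.range (mulMap k Λ a N) := by
  obtain ⟨m, rfl⟩ := hx
  exact ⟨φ m, (φ.map_smul a m).symm⟩

noncomputable def restrictMulMapRange (a : Λ) (φ : M →ₗ[Λ] N) :
    LinearMap.range (mulMap k Λ a M) →ₗ[k] LinearMap.range (mulMap k Λ a N) :=
  (φ.restrictScalars k).restrict fun _ => map_mem_range_mulMap a φ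

theorem restrictMulMapRange_injective (a : Λ) {φ : M →ₗ[Λ] N} (hφ : Function.Injective φ) :
    Function.Injective (restrictMulMapRange (k := k) a φ) :=
  fun _ _ hxy => Subtype.ext (hφ (congrArg Subtype.val hxy))

theorem restrictMulMapRange_surjective (a : Λ) {φ : M →ₗ[Λ] N} (hφ : Function.Surjective φ) :
    Function.Surjective (restrictMulMapRange (k := k) a φ) := by
  rintro ⟨_, n, rfl⟩
  obtain ⟨m, rfl⟩ := hφ n
  exact ⟨⟨a • m, m, rfl⟩, Subtype.ext (φ.map_smul a m)⟩

/-- `Λ a` is projective, so `Hom(Λ a, -) ≅ a • (-)` is exact. -/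
theorem range_restrictMulMapRange_eq_ker {a : Λ} (ha : IsIdempotentElem a)
    (hfg : LinearMap.range f = LinearMap.ker g) :
    LinearMap.range (restrictMulMapRange (k := k) a f)
      = LinearMap.ker (restrictMulMapRange (k := k) a g) := by
  ext ⟨x, hx⟩
  constructor
  · rintro ⟨y, hy⟩
    have hfy : f y ∈ LinearMap.ker g := hfg ▸ LinearMap.mem_range_self f y
    rw [LinearMap.mem_ker, ← hy]
    exact Subtype.ext hfy
  · intro hgx
    have hx' : x ∈ LinearMap.range f := hfg ▸ Subtype.ext_iff.1 hgx
    obtain ⟨y, rfl⟩ := hx'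
    refine ⟨⟨a • y, y, rfl⟩, Subtype.ext ?_⟩
    change f (a • y) = f y
    rw [f.map_smul, smul_eq_self_of_mem_range_mulMap ha hx]

theorem finrank_range_mulMap_eq_add [Module.Finite k B] {a : Λ} (ha : IsIdempotentElem a)
    (hf : Function.Injective f) (hg : Function.Surjective g)
    (hfg : LinearMap.range f = LinearMap.ker g) :
    finrank k (LinearMap.range (mulMap k Λ a B))
      = finrank k (LinearMap.range (mulMap k Λ a A))
        + finrank k (LinearMap.range (mulMap k Λ a C)) :=
  finrank_eq_add_of_range_eq_ker _ _ (restrictMulMapRange_injective a hf)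
    (restrictMulMapRange_surjective a hg) (range_restrictMulMapRange_eq_ker ha hfg)

variable (k) {n : ℕ} {e : Fin n → Λ} (θ : Fin n → ℝ)

theorem euler_congr (σ : M ≃ₗ[Λ] N) : euler k Λ e θ M = euler k Λ e θ N := by
  refine Finset.sum_congr rfl fun i _ => ?_
  rw [(LinearEquiv.ofBijective (restrictMulMapRange (k := k) (e i) σ.toLinearMap)
    ⟨restrictMulMapRange_injective _ σ.injective,
      restrictMulMapRange_surjective _ σ.surjective⟩).finrank_eq]

theorem euler_eq_add_of_range_eq_ker [Module.Finite k B] (he : ∀ i, IsIdempotentElem (e i))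
    (hf : Function.Injective f) (hg : Function.Surjective g)
    (hfg : LinearMap.range f = LinearMap.ker g) :
    euler k Λ e θ B = euler k Λ e θ A + euler k Λ e θ C := by
  simp only [euler, ← Finset.sum_add_distrib, ← mul_add,
    finrank_range_mulMap_eq_add (he _) hf hg hfg, Nat.cast_add]

theorem euler_eq_euler_add_euler_quotient [Module.Finite k M] (he : ∀ i, IsIdempotentElem (e i))
    (P : Submodule Λ M) : euler k Λ e θ M = euler k Λ e θ P + euler k Λ e θ (M ⧸ P) :=
  euler_eq_add_of_range_eq_ker k θ he P.injective_subtype P.mkQ_surjective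
    (by rw [P.range_subtype, P.ker_mkQ])

theorem euler_eq_euler_ker_add_euler_range [Module.Finite k M] (he : ∀ i, IsIdempotentElem (e i))
    (φ : M →ₗ[Λ] N) :
    euler k Λ e θ M = euler k Λ e θ (LinearMap.ker φ) + euler k Λ e θ (LinearMap.range φ) := by
  rw [euler_eq_euler_add_euler_quotient k θ he, euler_congr k θ φ.quotKerEquivRange]

variable {k θ}

theorem euler_nonpos_of_injective (hN : FbarMem k Λ e θ N) (φ : M →ₗ[Λ] N)
    (hφ : Function.Injective φ) : euler k Λ e θ M ≤ 0 := by
  rw [euler_congr k θ (LinearEquiv.ofInjective φ hφ)]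
  exact hN _

theorem FbarMem.of_injective (hN : FbarMem k Λ e θ N) {φ : M →ₗ[Λ] N}
    (hφ : Function.Injective φ) : FbarMem k Λ e θ M :=
  fun P => euler_nonpos_of_injective hN (φ ∘ₗ P.subtype) (hφ.comp P.injective_subtype)

theorem FbarMem.quotient [Module.Finite k N] (he : ∀ i, IsIdempotentElem (e i))
    (hN : FbarMem k Λ e θ N) {R : Submodule Λ N} (hR : euler k Λ e θ R = 0) :
    FbarMem k Λ e θ (N ⧸ R) := by
  intro Q
  let P := Q.comap R.mkQ
  have hRP : R ≤ P := fun x hx => by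
    simp [P, (Submodule.Quotient.mk_eq_zero R).2 hx]
  let φ : P →ₗ[Λ] N ⧸ R := R.mkQ ∘ₗ P.subtype
  have hker : euler k Λ e θ (LinearMap.ker φ) = 0 := by
    rw [show LinearMap.ker φ = R.comap P.subtype by rw [LinearMap.ker_comp, R.ker_mkQ],
      euler_congr k θ (Submodule.comapSubtypeEquivOfLe hRP), hR]
  have hrange : LinearMap.range φ = Q := by
    rw [LinearMap.range_comp, P.range_subtype,
      Submodule.map_comap_eq_of_surjective R.mkQ_surjective]
  have hsplit := euler_eq_euler_ker_add_euler_range k θ he φ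
  rw [hker, hrange, zero_add] at hsplit
  exact hsplit ▸ hN P

theorem FbarMem.of_range_eq_ker [Module.Finite k B] (he : ∀ i, IsIdempotentElem (e i))
    (hA : FbarMem k Λ e θ A) (hC : FbarMem k Λ e θ C) (hf : Function.Injective f)
    (hfg : LinearMap.range f = LinearMap.ker g) : FbarMem k Λ e θ B := by
  intro P
  let φ : P →ₗ[Λ] C := g ∘ₗ P.subtype
  have hker_mem : ∀ x : LinearMap.ker φ, ((x : P) : B) ∈ LinearMap.range f := fun x =>
    hfg ▸ x.2
  -- `ker φ = P ⊓ ker g = P ⊓ range f` embeds into `A`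
  let ι : LinearMap.ker φ →ₗ[Λ] A := (LinearEquiv.ofInjective f hf).symm.toLinearMap ∘ₗ
    LinearMap.codRestrict _ (P.subtype ∘ₗ (LinearMap.ker φ).subtype) hker_mem
  have hι : Function.Injective ι := by
    refine (LinearEquiv.ofInjective f hf).symm.injective.comp
      ((LinearMap.injective_codRestrict_iff _).2 ?_)
    rw [LinearMap.coe_comp]
    exact P.injective_subtype.comp (LinearMap.ker φ).injective_subtype
  rw [euler_eq_euler_ker_add_euler_range k θ he φ]
  exact add_nonpos (euler_nonpos_of_injective hA ι hι) (hC _)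

theorem WMem.euler_eq_zero (hM : WMem k Λ e θ M) : euler k Λ e θ M = 0 := by
  refine le_antisymm ?_ ?_
  · rw [← euler_congr k θ (Submodule.topEquiv : (⊤ : Submodule Λ M) ≃ₗ[Λ] M)]
    exact hM.2 ⊤
  · rw [euler_congr k θ (Submodule.quotEquivOfEqBot (⊥ : Submodule Λ M) rfl).symm]
    exact hM.1 ⊥

theorem WMem.of_euler_eq_zero [Module.Finite k M] (he : ∀ i, IsIdempotentElem (e i))
    (h0 : euler k Λ e θ M = 0) (hM : FbarMem k Λ e θ M) : WMem k Λ e θ M := by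
  refine ⟨fun P => ?_, hM⟩
  have := euler_eq_euler_add_euler_quotient k θ he P
  linarith [hM P]

theorem euler_range_eq_zero [Module.Finite k M] (he : ∀ i, IsIdempotentElem (e i))
    (hM : WMem k Λ e θ M) (hN : FbarMem k Λ e θ N) (φ : M →ₗ[Λ] N) :
    euler k Λ e θ (LinearMap.range φ) = 0 := by
  have := euler_eq_euler_ker_add_euler_range k θ he φ
  linarith [hM.euler_eq_zero, hM.2 (LinearMap.ker φ), hN (LinearMap.range φ)]

theorem euler_ker_eq_zero [Module.Finite k M] (he : ∀ i, IsIdempotentElem (e i))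
    (hM : WMem k Λ e θ M) (hN : FbarMem k Λ e θ N) (φ : M →ₗ[Λ] N) :
    euler k Λ e θ (LinearMap.ker φ) = 0 := by
  have := euler_eq_euler_ker_add_euler_range k θ he φ
  linarith [hM.euler_eq_zero, euler_range_eq_zero he hM hN φ]

theorem WMem.ker [Module.Finite k M] (he : ∀ i, IsIdempotentElem (e i))
    (hM : WMem k Λ e θ M) (hN : WMem k Λ e θ N) (φ : M →ₗ[Λ] N) :
    WMem k Λ e θ (LinearMap.ker φ) :=
  .of_euler_eq_zero he (euler_ker_eq_zero he hM hN.2 φ)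
    (hM.2.of_injective (LinearMap.ker φ).injective_subtype)

theorem WMem.quotient_range [Module.Finite k M] [Module.Finite k N]
    (he : ∀ i, IsIdempotentElem (e i)) (hM : WMem k Λ e θ M) (hN : WMem k Λ e θ N)
    (φ : M →ₗ[Λ] N) : WMem k Λ e θ (N ⧸ LinearMap.range φ) := by
  have hR := euler_range_eq_zero he hM hN.2 φ
  refine .of_euler_eq_zero he ?_ (hN.2.quotient he hR)
  linarith [euler_eq_euler_add_euler_quotient k θ he (LinearMap.range φ), hN.euler_eq_zero]

theorem WMem.of_range_eq_ker [Module.Finite k B] (he : ∀ i, IsIdempotentElem (e i))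
    (hA : WMem k Λ e θ A) (hC : WMem k Λ e θ C) (hf : Function.Injective f)
    (hg : Function.Surjective g) (hfg : LinearMap.range f = LinearMap.ker g) :
    WMem k Λ e θ B := by
  refine .of_euler_eq_zero he ?_ (hA.2.of_range_eq_ker he hC.2 hf hfg)
  rw [euler_eq_add_of_range_eq_ker k θ he hf hg hfg, hA.euler_eq_zero, hC.euler_eq_zero,
    add_zero]

end Modules

theorem stmt_9 {n : ℕ} (e : Fin n → Λ)
    (hidem : ∀ i, e i * e i = e i) (θ : Fin n → ℝ) :
    -- closed under kernels
    (∀ (M : Type) [AddCommGroup M] [Module k M] [Module Λ M] [IsScalarTower k Λ M]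
        [Module.Finite k M]
        (N : Type) [AddCommGroup N] [Module k N] [Module Λ N] [IsScalarTower k Λ N]
        [Module.Finite k N] (f : M →ₗ[Λ] N),
        WMem k Λ e θ M → WMem k Λ e θ N → WMem k Λ e θ (↥(LinearMap.ker f))) ∧
    -- closed under cokernels
    (∀ (M : Type) [AddCommGroup M] [Module k M] [Module Λ M] [IsScalarTower k Λ M]
        [Module.Finite k M]
        (N : Type) [AddCommGroup N] [Module k N] [Module Λ N] [IsScalarTower k Λ N]
        [Module.Finite k N] (f : M →ₗ[Λ] N),
        WMem k Λ e θ M → WMem k Λ e θ N → WMem k Λ e θ (N ⧸ LinearMap.range f)) ∧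
    -- closed under extensions
    (∀ (A : Type) [AddCommGroup A] [Module k A] [Module Λ A] [IsScalarTower k Λ A]
        [Module.Finite k A]
        (B : Type) [AddCommGroup B] [Module k B] [Module Λ B] [IsScalarTower k Λ B]
        [Module.Finite k B]
        (C : Type) [AddCommGroup C] [Module k C] [Module Λ C] [IsScalarTower k Λ C]
        [Module.Finite k C]
        (f : A →ₗ[Λ] B) (g : B →ₗ[Λ] C),
        Function.Injective f → Function.Surjective g →
        LinearMap.range f = LinearMap.ker g →
        WMem k Λ e θ A → WMem k Λ e θ C → WMem k Λ e θ B) :=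
  ⟨fun _ _ _ _ _ _ _ _ _ _ _ _ f hM hN => hM.ker hidem hN f,
    fun _ _ _ _ _ _ _ _ _ _ _ _ f hM hN => hM.quotient_range hidem hN f,
    fun _ _ _ _ _ _ _ _ _ _ _ _ _ _ _ _ _ _ _ _ hf hg hfg hA hC =>
      hA.of_range_eq_ker hidem hC hf hg hfg⟩
end

section
/- Let Λ be a finite-dimensional algebra and let θ, η ∈ K₀(proj Λ)_ℝ be TF-equivalent (i.e. T̄_θ = T̄_η and F̄_θ = F̄_η). Then for every module M ∈ T̄_θ there exists t ∈ ℕ with M ∈ T̄_{tθ − η}, where T̄_γ = {M : ⟨γ,[M']⟩ ≥ 0 for all quotients M' of M}. -/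
open Module

variable (k Λ : Type) [Field k] [Ring Λ] [Algebra k Λ]

/-!
A quotient `Q` of `M ∈ T̄_θ` has `⟨θ, Q⟩ ≥ 0`. If `⟨θ, Q⟩ = 0`, every submodule of `Q` pairs
nonpositively with `θ` by additivity, so `Q ∈ F̄_θ = F̄_η` and `⟨η, Q⟩ ≤ 0`; hence
`⟨tθ - η, Q⟩ ≥ 0` for every `t`. If `⟨θ, Q⟩ > 0`, this holds for all large `t`. The pairings
only depend on the dimension vector of `Q`, which is bounded by that of `M`, so only finitely
many quotients need to be considered and a single `t` works for all of them.
-/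

open Filter

/-- The dimension vector `(dim_k Hom(Λ e_i, M))_i`, in terms of which `euler` is defined. -/
noncomputable def dimVector {n : ℕ} (e : Fin n → Λ) (M : Type) [AddCommGroup M] [Module k M]
    [Module Λ M] [IsScalarTower k Λ M] : Fin n → ℕ :=
  fun i => Module.finrank k (LinearMap.range (mulMap k Λ (e i) M))

section DimVector

variable {X Y : Type} [AddCommGroup X] [Module k X] [Module Λ X] [IsScalarTower k Λ X]
  [AddCommGroup Y] [Module k Y] [Module Λ Y] [IsScalarTower k Λ Y]

theorem mulMap_apply (a : Λ) (x : X) : mulMap k Λ a X x = a • x := rfl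

theorem restrictScalars_comp_mulMap (a : Λ) (g : X →ₗ[Λ] Y) :
    g.restrictScalars k ∘ₗ mulMap k Λ a X = mulMap k Λ a Y ∘ₗ g.restrictScalars k := by
  ext x
  simp [mulMap_apply]

theorem map_range_mulMap_of_surjective (a : Λ) (g : X →ₗ[Λ] Y) (hg : Function.Surjective g) :
    (LinearMap.range (mulMap k Λ a X)).map (g.restrictScalars k) =
      LinearMap.range (mulMap k Λ a Y) := by
  rw [← LinearMap.range_comp, restrictScalars_comp_mulMap, LinearMap.range_comp,
    LinearMap.range_eq_top.mpr (show Function.Surjective (g.restrictScalars k) from hg),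
    Submodule.map_top]

theorem map_subtype_range_mulMap_of_idempotent (a : Λ) (ha : a * a = a) (N : Submodule Λ X) :
    (LinearMap.range (mulMap k Λ a N)).map (N.subtype.restrictScalars k) =
      LinearMap.range (mulMap k Λ a X) ⊓ N.restrictScalars k := by
  ext y
  simp only [Submodule.mem_map, LinearMap.mem_range, Submodule.mem_inf,
    Submodule.restrictScalars_mem, LinearMap.coe_restrictScalars, Submodule.coe_subtype]
  constructor
  · rintro ⟨_, ⟨x, rfl⟩, rfl⟩
    exact ⟨⟨x, rfl⟩, (a • x).2⟩
  · rintro ⟨⟨x, rfl⟩, hxN⟩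
    refine ⟨a • ⟨a • x, hxN⟩, ⟨_, rfl⟩, ?_⟩
    change a • a • x = a • x
    rw [smul_smul, ha]

variable {n : ℕ} (e : Fin n → Λ)

theorem dimVector_le_of_surjective [Module.Finite k X] (g : X →ₗ[Λ] Y)
    (hg : Function.Surjective g) : dimVector k Λ e Y ≤ dimVector k Λ e X := fun i => by
  rw [dimVector, dimVector, ← map_range_mulMap_of_surjective k Λ (e i) g hg]
  exact Submodule.finrank_map_le _ _

theorem dimVector_congr (f : X ≃ₗ[Λ] Y) : dimVector k Λ e X = dimVector k Λ e Y := by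
  ext i
  rw [dimVector, dimVector, ← map_range_mulMap_of_surjective k Λ (e i) f.toLinearMap f.surjective]
  exact ((f.restrictScalars k).finrank_map_eq _).symm

/-- For an idempotent `e_i`, `Hom(Λ e_i, -)` is exact, so dimension vectors are additive. -/
theorem dimVector_submodule_add_quotient (hidem : ∀ i, e i * e i = e i) [Module.Finite k X]
    (N : Submodule Λ X) :
    dimVector k Λ e N + dimVector k Λ e (X ⧸ N) = dimVector k Λ e X := by
  ext i
  set p : Submodule k X := LinearMap.range (mulMap k Λ (e i) X)
  set φ : p →ₗ[k] X ⧸ N := N.mkQ.restrictScalars k ∘ₗ p.subtype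
  have hrange : LinearMap.range φ = LinearMap.range (mulMap k Λ (e i) (X ⧸ N)) := by
    rw [LinearMap.range_comp, Submodule.range_subtype]
    exact map_range_mulMap_of_surjective k Λ (e i) N.mkQ N.mkQ_surjective
  have hker : LinearMap.ker φ = (p ⊓ N.restrictScalars k).comap p.subtype := by
    rw [LinearMap.ker_comp, LinearMap.ker_restrictScalars, Submodule.ker_mkQ,
      Submodule.comap_inf, Submodule.comap_subtype_self, top_inf_eq]
  have hsub : dimVector k Λ e N i = Module.finrank k (LinearMap.ker φ) := by
    rw [hker, (Submodule.comapSubtypeEquivOfLe inf_le_left).finrank_eq, dimVector,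
      ← map_subtype_range_mulMap_of_idempotent k Λ (e i) (hidem i) N]
    exact (Submodule.equivMapOfInjective _ Subtype.val_injective _).finrank_eq
  rw [Pi.add_apply, hsub, dimVector, ← hrange, add_comm]
  exact LinearMap.finrank_range_add_finrank_ker φ

theorem finite_range_dimVector_quotient [Module.Finite k X] :
    (Set.range fun N : Submodule Λ X => dimVector k Λ e (X ⧸ N)).Finite :=
  (Set.finite_Iic (dimVector k Λ e X)).subset <| Set.range_subset_iff.mpr fun N =>
    dimVector_le_of_surjective k Λ e N.mkQ N.mkQ_surjective

end DimVector

section Euler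

variable {n : ℕ} (e : Fin n → Λ) {X : Type} [AddCommGroup X] [Module k X] [Module Λ X]
  [IsScalarTower k Λ X]

theorem euler_eq_sum_dimVector (θ : Fin n → ℝ) :
    euler k Λ e θ X = ∑ i, θ i * (dimVector k Λ e X i : ℝ) := rfl

theorem euler_congr_s10 (θ : Fin n → ℝ) {Y : Type} [AddCommGroup Y] [Module k Y] [Module Λ Y]
    [IsScalarTower k Λ Y] (f : X ≃ₗ[Λ] Y) : euler k Λ e θ X = euler k Λ e θ Y := by
  rw [euler_eq_sum_dimVector, euler_eq_sum_dimVector, dimVector_congr k Λ e f]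

theorem euler_submodule_add_quotient (hidem : ∀ i, e i * e i = e i) (θ : Fin n → ℝ)
    [Module.Finite k X] (N : Submodule Λ X) :
    euler k Λ e θ N + euler k Λ e θ (X ⧸ N) = euler k Λ e θ X := by
  simp only [euler_eq_sum_dimVector, ← Finset.sum_add_distrib, ← mul_add,
    ← dimVector_submodule_add_quotient k Λ e hidem N, Pi.add_apply, Nat.cast_add]

theorem euler_smul_sub (t : ℝ) (θ η : Fin n → ℝ) :
    euler k Λ e (t • θ - η) X = t * euler k Λ e θ X - euler k Λ e η X := by
  simp only [euler_eq_sum_dimVector, Pi.sub_apply, Pi.smul_apply, smul_eq_mul, sub_mul,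
    mul_assoc, Finset.sum_sub_distrib, Finset.mul_sum]

theorem TbarMem.quotient {θ : Fin n → ℝ} (hX : TbarMem k Λ e θ X) (N : Submodule Λ X) :
    TbarMem k Λ e θ (X ⧸ N) := fun P => by
  rw [← euler_congr_s10 k Λ e θ ((P.mkQ ∘ₗ N.mkQ).quotKerEquivOfSurjective
    (P.mkQ_surjective.comp N.mkQ_surjective))]
  exact hX _

theorem FbarMem.euler_nonpos {θ : Fin n → ℝ} (hX : FbarMem k Λ e θ X) : euler k Λ e θ X ≤ 0 :=
  (euler_congr_s10 k Λ e θ (Submodule.topEquiv (M := X))).symm ▸ hX ⊤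

theorem fbarMem_of_tbarMem_of_euler_eq_zero (hidem : ∀ i, e i * e i = e i) {θ : Fin n → ℝ}
    [Module.Finite k X] (hX : TbarMem k Λ e θ X) (h0 : euler k Λ e θ X = 0) :
    FbarMem k Λ e θ X := fun N => by
  linarith [euler_submodule_add_quotient k Λ e hidem θ N, hX N]

end Euler

theorem eventually_le_natCast_mul {a b : ℝ} (ha : 0 ≤ a) (hb : a = 0 → b ≤ 0) :
    ∀ᶠ t : ℕ in atTop, b ≤ t * a := by
  rcases ha.eq_or_lt with rfl | ha
  · exact Eventually.of_forall fun _ => by simpa using hb rfl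
  · exact (tendsto_natCast_atTop_atTop.atTop_mul_const ha).eventually_ge_atTop b

theorem stmt_10 {n : ℕ} (e : Fin n → Λ)
    (hidem : ∀ i, e i * e i = e i) (θ η : Fin n → ℝ)
    -- TF-equivalence of θ and η
    (hF : ∀ (M : Type) [AddCommGroup M] [Module k M] [Module Λ M] [IsScalarTower k Λ M]
        [Module.Finite k M], FbarMem k Λ e θ M ↔ FbarMem k Λ e η M) :
    ∀ (M : Type) [AddCommGroup M] [Module k M] [Module Λ M] [IsScalarTower k Λ M]
        [Module.Finite k M],
      TbarMem k Λ e θ M → ∃ t : ℕ, 0 < t ∧ TbarMem k Λ e ((t : ℝ) • θ - η) M := by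
  intro M _ _ _ _ _ hM
  have hquot (N : Submodule Λ M) :
      ∀ᶠ t : ℕ in atTop, euler k Λ e η (M ⧸ N) ≤ t * euler k Λ e θ (M ⧸ N) := by
    refine eventually_le_natCast_mul (hM N) fun h0 => ?_
    have hθ := fbarMem_of_tbarMem_of_euler_eq_zero k Λ e hidem (hM.quotient k Λ e N) h0
    exact ((hF _).mp hθ).euler_nonpos
  have hall : ∀ᶠ t : ℕ in atTop, ∀ v ∈ Set.range fun N : Submodule Λ M => dimVector k Λ e (M ⧸ N),
      ∑ i, η i * (v i : ℝ) ≤ t * ∑ i, θ i * (v i : ℝ) :=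
    (finite_range_dimVector_quotient k Λ e).eventually_all.mpr <| by
      rintro _ ⟨N, rfl⟩
      exact hquot N
  obtain ⟨t, ht, ht0⟩ := (hall.and (eventually_gt_atTop 0)).exists
  refine ⟨t, ht0, fun N => ?_⟩
  have htN := ht (dimVector k Λ e (M ⧸ N)) ⟨N, rfl⟩
  rw [euler_smul_sub, euler_eq_sum_dimVector, euler_eq_sum_dimVector]
  linarith
end
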